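/- For an integer a and natural numbers s, t, the symmetric Gaussian binomials satisfy the product expansion [a, s]·[a, t] = ∑_{γ=0}^{min(s,t)} v^{s·t - a·γ} · [a, s+t-γ] · [s+t-γ; γ, s-γ, t-γ], where [m; γ, s-γ, t-γ] denotes the symmetric Gaussian multinomial coefficient [m, γ]·[m-γ, s-γ]·[m-γ-(s-γ), t-γ] with m = s+t-γ. -/

import Mathlib

/-!
With `q = v²`, write `[[N, k]]` as a ratio of `q`-falling factorials. The `q`-analogue of
`C(N, k) C(k, s) = C(N, s) C(N - s, k - s)`, applied three times, turns the summand
`q^{(s-γ)(t-γ)} [[a, s+t-γ]] [[s+t-γ, γ]] [[s+t-2γ, s-γ]]` into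
`[[a, s]] · q^{(s-γ)(t-γ)} [[s, γ]] [[a-s, t-γ]]`, and summing the latter over `γ` gives
`[[a, s]] [[a, t]]` by the `q`-Vandermonde identity. That identity holds for every integer `a`,
by induction on `s` using both `q`-Pascal rules. The powers of `v` in the symmetric normalisation
then agree by a quadratic identity in the exponents.
-/

/-- The indeterminate `v`, viewed in the field of rational functions `ℚ(v)`. -/
noncomputable def v : RatFunc ℚ := RatFunc.X

/-- The Gaussian binomial `[[N, t]] = ∏_{i=1}^{t} (v^{2(N-i+1)} - 1)/(v^{2i} - 1)`. -/
noncomputable def dblBrack (N : ℤ) (t : ℕ) : RatFunc ℚ :=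
  ∏ i ∈ Finset.range t, (v ^ (2 * (N - (i : ℤ))) - 1) / (v ^ (2 * ((i : ℤ) + 1)) - 1)

/-- The symmetric Gaussian binomial `[N, t] = v^{-t(N-t)} [[N, t]]`. -/
noncomputable def symBrack (N : ℤ) (t : ℕ) : RatFunc ℚ :=
  v ^ (-(t : ℤ) * (N - (t : ℤ))) * dblBrack N t

open Finset

lemma v_ne_zero : v ≠ 0 := RatFunc.X_ne_zero

lemma v_pow_ne_one {n : ℕ} (hn : n ≠ 0) : v ^ n ≠ 1 := by
  intro h
  have := congrArg Polynomial.natDegree (RatFunc.algebraMap_injective ℚ (by simpa [v] using h) :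
    (Polynomial.X : Polynomial ℚ) ^ n = 1)
  simp_all

lemma v_zpow_add (m n : ℤ) : v ^ (m + n) = v ^ m * v ^ n := zpow_add₀ v_ne_zero m n

noncomputable def qDescFactorial (N : ℤ) (k : ℕ) : RatFunc ℚ :=
  ∏ i ∈ range k, (v ^ (2 * (N - (i : ℤ))) - 1)

noncomputable def qFactorial (k : ℕ) : RatFunc ℚ :=
  ∏ i ∈ range k, (v ^ (2 * ((i : ℤ) + 1)) - 1)

lemma v_zpow_two_mul_succ_sub_one_ne_zero (k : ℕ) : v ^ (2 * ((k : ℤ) + 1)) - 1 ≠ 0 := by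
  rw [sub_ne_zero, show 2 * ((k : ℤ) + 1) = ((2 * (k + 1) : ℕ) : ℤ) by push_cast; ring,
    zpow_natCast]
  exact v_pow_ne_one (by omega)

lemma qFactorial_ne_zero (k : ℕ) : qFactorial k ≠ 0 :=
  prod_ne_zero_iff.mpr fun i _ => v_zpow_two_mul_succ_sub_one_ne_zero i

lemma qFactorial_succ (k : ℕ) :
    qFactorial (k + 1) = qFactorial k * (v ^ (2 * ((k : ℤ) + 1)) - 1) :=
  prod_range_succ _ k

lemma qDescFactorial_succ (N : ℤ) (k : ℕ) :
    qDescFactorial N (k + 1) = qDescFactorial N k * (v ^ (2 * (N - k)) - 1) :=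
  prod_range_succ _ k

lemma qDescFactorial_add_one_succ (N : ℤ) (k : ℕ) :
    qDescFactorial (N + 1) (k + 1) = qDescFactorial N k * (v ^ (2 * (N + 1)) - 1) := by
  rw [qDescFactorial, prod_range_succ', qDescFactorial]
  push_cast
  congr 1
  · exact prod_congr rfl fun i _ => by ring_nf
  · simp

lemma qDescFactorial_add (N : ℤ) (k j : ℕ) :
    qDescFactorial N (k + j) = qDescFactorial N k * qDescFactorial (N - k) j := by
  rw [qDescFactorial, prod_range_add, qDescFactorial, qDescFactorial]
  push_cast
  exact congrArg _ (prod_congr rfl fun i _ => by ring_nf)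

lemma qDescFactorial_natCast_self (n : ℕ) : qDescFactorial n n = qFactorial n := by
  rw [qDescFactorial, qFactorial, ← prod_range_reflect]
  refine prod_congr rfl fun i hi => ?_
  rw [show ((n - 1 - i : ℕ) : ℤ) = n - 1 - i by simp at hi; omega]
  ring_nf

lemma qDescFactorial_mul_qFactorial_sub {n k : ℕ} (h : k ≤ n) :
    qDescFactorial n k * qFactorial (n - k) = qFactorial n := by
  rw [← qDescFactorial_natCast_self (n - k), Nat.cast_sub h, ← qDescFactorial_add,
    Nat.add_sub_cancel' h, qDescFactorial_natCast_self]

lemma dblBrack_eq_div (N : ℤ) (k : ℕ) : dblBrack N k = qDescFactorial N k / qFactorial k :=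
  prod_div_distrib _ _

@[simp]
lemma dblBrack_zero_right (N : ℤ) : dblBrack N 0 = 1 := by simp [dblBrack]

lemma dblBrack_natCast_of_le {n k : ℕ} (h : k ≤ n) :
    dblBrack n k = qFactorial n / (qFactorial k * qFactorial (n - k)) := by
  rw [dblBrack_eq_div, ← qDescFactorial_mul_qFactorial_sub h]
  field_simp [qFactorial_ne_zero]

lemma dblBrack_natCast_of_lt {n k : ℕ} (h : n < k) : dblBrack n k = 0 := by
  rw [dblBrack_eq_div, qDescFactorial, prod_eq_zero (mem_range.mpr h) (by simp), zero_div]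

lemma v_zpow_two_mul_add_one (N : ℤ) (k : ℕ) :
    v ^ (2 * (N + 1)) = v ^ (2 * (N - k)) * v ^ (2 * ((k : ℤ) + 1)) := by
  rw [← v_zpow_add]; ring_nf

lemma dblBrack_succ_succ (N : ℤ) (k : ℕ) :
    dblBrack (N + 1) (k + 1) = v ^ (2 * (N - k)) * dblBrack N k + dblBrack N (k + 1) := by
  rw [dblBrack_eq_div, dblBrack_eq_div, dblBrack_eq_div, qDescFactorial_add_one_succ,
    qDescFactorial_succ, qFactorial_succ]
  have := qFactorial_ne_zero k
  have := v_zpow_two_mul_succ_sub_one_ne_zero k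
  field_simp
  linear_combination qDescFactorial N k * v_zpow_two_mul_add_one N k

lemma dblBrack_succ_succ' (N : ℤ) (k : ℕ) :
    dblBrack (N + 1) (k + 1) = dblBrack N k + v ^ (2 * ((k : ℤ) + 1)) * dblBrack N (k + 1) := by
  rw [dblBrack_eq_div, dblBrack_eq_div, dblBrack_eq_div, qDescFactorial_add_one_succ,
    qDescFactorial_succ, qFactorial_succ]
  have := qFactorial_ne_zero k
  have := v_zpow_two_mul_succ_sub_one_ne_zero k
  field_simp
  linear_combination qDescFactorial N k * v_zpow_two_mul_add_one N k

lemma sum_antidiagonal_dblBrack_succ (m : ℕ) (n : ℤ) (k : ℕ) :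
    ∑ p ∈ antidiagonal k,
        v ^ (2 * (((m : ℤ) + 1 - p.1) * p.2)) * dblBrack ((m : ℤ) + 1) p.1 * dblBrack n p.2
      = ∑ p ∈ antidiagonal k,
        v ^ (2 * (((m : ℤ) - p.1) * p.2)) * dblBrack m p.1 * dblBrack (n + 1) p.2 := by
  cases k with
  | zero => simp
  | succ k =>
    set G : ℕ × ℕ → RatFunc ℚ := fun p =>
      v ^ (2 * (((m : ℤ) + 1 - p.1) * p.2)) * dblBrack m p.1 * dblBrack n p.2
    set H : RatFunc ℚ := ∑ p ∈ antidiagonal k,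
      v ^ (2 * (((m : ℤ) - p.1) * (p.2 + 1))) * dblBrack m p.1 * dblBrack n p.2
    calc _ = G (0, k + 1) + ∑ p ∈ antidiagonal k,
            v ^ (2 * (((m : ℤ) - p.1) * p.2)) * (v ^ (2 * ((m : ℤ) - p.1)) * dblBrack m p.1
              + dblBrack m (p.1 + 1)) * dblBrack n p.2 := by
          rw [Nat.sum_antidiagonal_succ]
          simp [G, dblBrack_succ_succ]
      _ = ∑ p ∈ antidiagonal (k + 1), G p + H := by
          rw [Nat.sum_antidiagonal_succ, add_assoc, ← sum_add_distrib]
          refine congrArg _ (sum_congr rfl fun p _ => ?_)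
          rw [show 2 * (((m : ℤ) - p.1) * (p.2 + 1))
              = 2 * (((m : ℤ) - p.1) * p.2) + 2 * ((m : ℤ) - p.1) by ring, v_zpow_add]
          simp only [G]
          push_cast
          ring_nf
      _ = dblBrack m (k + 1) + ∑ p ∈ antidiagonal k,
            v ^ (2 * (((m : ℤ) - p.1) * (p.2 + 1))) * dblBrack m p.1
              * (dblBrack n p.2 + v ^ (2 * ((p.2 : ℤ) + 1)) * dblBrack n (p.2 + 1)) := by
          rw [Nat.sum_antidiagonal_succ', add_assoc, ← sum_add_distrib]
          congr 1
          · simp [G]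
          · refine sum_congr rfl fun p _ => ?_
            simp only [G]
            push_cast
            rw [show 2 * (((m : ℤ) + 1 - p.1) * (p.2 + 1))
                = 2 * (((m : ℤ) - p.1) * (p.2 + 1)) + 2 * ((p.2 : ℤ) + 1) by ring, v_zpow_add]
            ring
      _ = _ := by
          rw [Nat.sum_antidiagonal_succ']
          simp [dblBrack_succ_succ']

theorem dblBrack_natCast_add_eq_sum (m : ℕ) (n : ℤ) (k : ℕ) :
    dblBrack (m + n) k = ∑ p ∈ antidiagonal k,
      v ^ (2 * (((m : ℤ) - p.1) * p.2)) * dblBrack m p.1 * dblBrack n p.2 := by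
  induction m generalizing n with
  | zero =>
    rw [Nat.sum_antidiagonal_eq_sum_range_succ_mk, sum_range_succ', sum_eq_zero fun i _ => by
      rw [dblBrack_natCast_of_lt (by omega), mul_zero, zero_mul]]
    simp
  | succ m ih =>
    push_cast
    rw [sum_antidiagonal_dblBrack_succ, ← ih, add_right_comm, add_assoc]

lemma dblBrack_mul_dblBrack_natCast (N : ℤ) {k s : ℕ} (h : s ≤ k) :
    dblBrack N k * dblBrack k s = dblBrack N s * dblBrack (N - s) (k - s) := by
  obtain ⟨j, rfl⟩ := Nat.exists_eq_add_of_le h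
  rw [dblBrack_natCast_of_le h, dblBrack_eq_div, dblBrack_eq_div, dblBrack_eq_div,
    qDescFactorial_add, Nat.add_sub_cancel_left]
  have := qFactorial_ne_zero (s + j)
  have := qFactorial_ne_zero s
  have := qFactorial_ne_zero j
  field_simp

theorem dblBrack_mul_dblBrack (a : ℤ) (s t : ℕ) :
    dblBrack a s * dblBrack a t = ∑ γ ∈ range (min s t + 1),
      v ^ (2 * (((s : ℤ) - γ) * ((t : ℤ) - γ))) * dblBrack a (s + t - γ)
        * dblBrack ((s : ℤ) + t - γ) γ * dblBrack ((s : ℤ) + t - 2 * γ) (s - γ) := by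
  have hV := dblBrack_natCast_add_eq_sum s (a - s) t
  rw [add_sub_cancel] at hV
  rw [hV, Nat.sum_antidiagonal_eq_sum_range_succ_mk, mul_sum,
    ← sum_subset (range_subset_range.mpr (by omega : min s t + 1 ≤ t + 1))]
  · refine sum_congr rfl fun γ hγ => ?_
    have hγs : γ ≤ s := by simp at hγ; omega
    have hγt : γ ≤ t := by simp at hγ; omega
    have h1 := dblBrack_mul_dblBrack_natCast a (k := s + t - γ) (s := γ) (by omega)
    have h2 := dblBrack_mul_dblBrack_natCast (a - γ) (k := s + t - γ - γ) (s := s - γ) (by omega)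
    have h3 := dblBrack_mul_dblBrack_natCast a hγs
    rw [show ((s + t - γ : ℕ) : ℤ) = s + t - γ by omega] at h1
    rw [show ((s + t - γ - γ : ℕ) : ℤ) = s + t - 2 * γ by omega,
      show a - γ - (s - γ : ℕ) = a - s by omega,
      show s + t - γ - γ - (s - γ) = t - γ by omega] at h2
    rw [show ((t - γ : ℕ) : ℤ) = t - γ by omega]
    set q := v ^ (2 * (((s : ℤ) - γ) * ((t : ℤ) - γ)))
    linear_combination q * dblBrack (a - s) (t - γ) * h3
      - q * dblBrack ((s : ℤ) + t - 2 * γ) (s - γ) * h1 - q * dblBrack a γ * h2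
  · intro γ hγt hγ
    simp only [mem_range] at hγt hγ
    rw [dblBrack_natCast_of_lt (by omega), mul_zero, zero_mul, mul_zero]

/-- Product expansion:
`[a,s]·[a,t] = ∑_{γ=0}^{min(s,t)} v^{s·t - a·γ} · [a, s+t-γ] · [s+t-γ; γ, s-γ, t-γ]`,
where the symmetric Gaussian multinomial is `[m; γ, s-γ, t-γ] = [m, γ]·[m-γ, s-γ]`
with `m = s+t-γ`. -/
theorem symBrack_mul_symBrack (a : ℤ) (s t : ℕ) :
    symBrack a s * symBrack a t =
      ∑ γ ∈ Finset.range (min s t + 1),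
        v ^ ((s : ℤ) * (t : ℤ) - a * (γ : ℤ)) * symBrack a (s + t - γ) *
          (symBrack ((s : ℤ) + (t : ℤ) - (γ : ℤ)) γ *
            symBrack ((s : ℤ) + (t : ℤ) - 2 * (γ : ℤ)) (s - γ)) := by
  rw [symBrack, symBrack, mul_mul_mul_comm, dblBrack_mul_dblBrack, mul_sum]
  refine sum_congr rfl fun γ hγ => ?_
  have hγs : γ ≤ s := by simp at hγ; omega
  have hγt : γ ≤ t := by simp at hγ; omega
  have hv : v ^ (-(s : ℤ) * (a - s)) * v ^ (-(t : ℤ) * (a - t))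
        * v ^ (2 * (((s : ℤ) - γ) * ((t : ℤ) - γ)))
      = v ^ ((s : ℤ) * t - a * γ) * v ^ (-((s + t - γ : ℕ) : ℤ) * (a - (s + t - γ : ℕ)))
        * v ^ (-(γ : ℤ) * ((s : ℤ) + t - γ - γ))
        * v ^ (-((s - γ : ℕ) : ℤ) * ((s : ℤ) + t - 2 * γ - (s - γ : ℕ))) := by
    simp only [← v_zpow_add]
    congr 1
    push_cast [hγs, Nat.cast_sub (show γ ≤ s + t by omega)]
    ring
  simp only [symBrack]
  linear_combination (dblBrack a (s + t - γ) * dblBrack ((s : ℤ) + t - γ) γ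
    * dblBrack ((s : ℤ) + t - 2 * γ) (s - γ)) * hv
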